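/- Block-matrix computation for A (from the proof of Lemma 9.7): let n ∈ ℕ and A'' ∈ Matrix (Fin n) (Fin n) ℤ, and let A = Matrix.fromBlocks (2•1) A'' 1 (2•1) be the square integer matrix of size 2n with diagonal blocks 2·(identity) and off-diagonal blocks A'' (upper right) and the identity (lower left). Then there are isomorphisms of abelian groups coker(1 − A) ≅ coker(A'' − 1) and ker(1 − A) ≅ ker(A'' − 1). -/
import Mathlib

private lemma blocks_key (n : ℕ) (A'' : Matrix (Fin n) (Fin n) ℤ)
    (w : Fin n ⊕ Fin n → ℤ) :
    Matrix.mulVecLin (1 - Matrix.fromBlocks (2 • (1 : Matrix (Fin n) (Fin n) ℤ)) A''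
      (1 : Matrix (Fin n) (Fin n) ℤ) (2 • (1 : Matrix (Fin n) (Fin n) ℤ))) w
      = Sum.elim (-(w ∘ Sum.inl) - A''.mulVec (w ∘ Sum.inr))
          (-(w ∘ Sum.inl) - (w ∘ Sum.inr)) := by
  have h1 : (1 : Matrix (Fin n ⊕ Fin n) (Fin n ⊕ Fin n) ℤ) -
      Matrix.fromBlocks (2 • (1 : Matrix (Fin n) (Fin n) ℤ)) A'' 1 (2 • 1) =
      Matrix.fromBlocks (-1) (-A'') (-1) (-1) := by
    rw [← Matrix.fromBlocks_one, sub_eq_add_neg, Matrix.fromBlocks_neg,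
      Matrix.fromBlocks_add]
    congr 1 <;> simp [two_smul]
  rw [Matrix.mulVecLin_apply, h1, Matrix.fromBlocks_mulVec]
  simp [Matrix.neg_mulVec, Matrix.one_mulVec, sub_eq_add_neg]

/-- Block-matrix computation for `A`: if
`A = fromBlocks (2•1) A'' 1 (2•1)`, then `coker(1 − A) ≅ coker(A'' − 1)` and
`ker(1 − A) ≅ ker(A'' − 1)` as abelian groups. -/
theorem blocks_A_coker_ker (n : ℕ) (A'' : Matrix (Fin n) (Fin n) ℤ)
    (A : Matrix (Fin n ⊕ Fin n) (Fin n ⊕ Fin n) ℤ)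
    (hA : A = Matrix.fromBlocks (2 • (1 : Matrix (Fin n) (Fin n) ℤ)) A''
      (1 : Matrix (Fin n) (Fin n) ℤ) (2 • (1 : Matrix (Fin n) (Fin n) ℤ))) :
    Nonempty ((((Fin n ⊕ Fin n) → ℤ) ⧸ LinearMap.range (Matrix.mulVecLin (1 - A))) ≃+
      ((Fin n → ℤ) ⧸ LinearMap.range (Matrix.mulVecLin (A'' - 1)))) ∧
    Nonempty ((LinearMap.ker (Matrix.mulVecLin (1 - A))) ≃+
      (LinearMap.ker (Matrix.mulVecLin (A'' - 1)))) := by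
  subst hA
  set M := Matrix.fromBlocks (2 • (1 : Matrix (Fin n) (Fin n) ℤ)) A''
      (1 : Matrix (Fin n) (Fin n) ℤ) (2 • (1 : Matrix (Fin n) (Fin n) ℤ)) with hM
  have key := blocks_key n A''
  have hrange : ∀ x, Matrix.mulVecLin (A'' - 1) x = A''.mulVec x - x := by
    intro x
    rw [Matrix.mulVecLin_apply, Matrix.sub_mulVec, Matrix.one_mulVec]
  constructor
  · -- coker
    set Φ : ((Fin n ⊕ Fin n) → ℤ) →ₗ[ℤ] (Fin n → ℤ) :=
      LinearMap.funLeft ℤ ℤ Sum.inl -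
        (Matrix.mulVecLin A'').comp (LinearMap.funLeft ℤ ℤ Sum.inr) with hΦ
    have hΦapp : ∀ w, Φ w = (w ∘ Sum.inl) - A''.mulVec (w ∘ Sum.inr) := fun w => rfl
    set R := LinearMap.range (Matrix.mulVecLin (A'' - 1)) with hR
    set ψ : ((Fin n ⊕ Fin n) → ℤ) →ₗ[ℤ] ((Fin n → ℤ) ⧸ R) := R.mkQ.comp Φ with hψ
    have hle : LinearMap.range (Matrix.mulVecLin (1 - M)) ≤ LinearMap.ker ψ := by
      rintro _ ⟨w, rfl⟩
      have h2 : Φ (Matrix.mulVecLin (1 - M) w) =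
          Matrix.mulVecLin (A'' - 1) (w ∘ Sum.inl) := by
        rw [hΦapp, key, hrange]
        simp only [Sum.elim_comp_inl, Sum.elim_comp_inr, Matrix.mulVec_sub,
          Matrix.mulVec_neg]
        ring
      simp only [LinearMap.mem_ker, hψ, LinearMap.comp_apply, h2,
        Submodule.mkQ_apply, Submodule.Quotient.mk_eq_zero]
      exact ⟨w ∘ Sum.inl, rfl⟩
    set F := Submodule.liftQ _ ψ hle with hF
    have hsurj : Function.Surjective F := by
      intro q
      obtain ⟨u, rfl⟩ := Submodule.mkQ_surjective R q
      exact ⟨Submodule.Quotient.mk (Sum.elim u 0), by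
        simp only [hF, Submodule.liftQ_apply, hψ, LinearMap.comp_apply, hΦapp]
        simp⟩
    have hinj : Function.Injective F := by
      rw [← LinearMap.ker_eq_bot, hF, Submodule.ker_liftQ_eq_bot]
      rintro w hw
      simp only [LinearMap.mem_ker, hψ, LinearMap.comp_apply, Submodule.mkQ_apply,
        Submodule.Quotient.mk_eq_zero, hR, LinearMap.mem_range] at hw
      obtain ⟨x, hx⟩ := hw
      refine ⟨Sum.elim x (-((w ∘ Sum.inr) + x)), ?_⟩
      rw [key]
      have hx' : A''.mulVec x - x = (w ∘ Sum.inl) - A''.mulVec (w ∘ Sum.inr) := by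
        rw [← hrange, hx, hΦapp]
      have hw' : Sum.elim (w ∘ Sum.inl) (w ∘ Sum.inr) = w := Sum.elim_comp_inl_inr w
      rw [← hw']
      simp only [Sum.elim_comp_inl, Sum.elim_comp_inr, Matrix.mulVec_neg,
        Matrix.mulVec_add]
      funext i
      cases i with
      | inl i =>
        have h3 := congrFun hx' i
        simp only [Sum.elim_inl, Pi.sub_apply, Pi.neg_apply, Pi.add_apply,
          Function.comp_apply] at *
        linarith
      | inr i =>
        simp only [Sum.elim_inr, Pi.sub_apply, Pi.neg_apply, Pi.add_apply,
          Function.comp_apply]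
        ring
    exact ⟨(LinearEquiv.ofBijective F ⟨hinj, hsurj⟩).toAddEquiv⟩
  · -- kernel
    have hker : ∀ w, w ∈ LinearMap.ker (Matrix.mulVecLin (1 - M)) ↔
        (w ∘ Sum.inl = -(w ∘ Sum.inr) ∧
          Matrix.mulVecLin (A'' - 1) (w ∘ Sum.inr) = 0) := by
      intro w
      rw [LinearMap.mem_ker, key]
      constructor
      · intro h
        have h1 : -(w ∘ Sum.inl) - A''.mulVec (w ∘ Sum.inr) = (0 : Fin n → ℤ) :=
          congrArg (· ∘ Sum.inl) h
        have h2 : -(w ∘ Sum.inl) - (w ∘ Sum.inr) = (0 : Fin n → ℤ) :=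
          congrArg (· ∘ Sum.inr) h
        have hl : w ∘ Sum.inl = -(w ∘ Sum.inr) := by linear_combination -h2
        refine ⟨hl, ?_⟩
        rw [hrange]
        rw [hl] at h1
        linear_combination -h1
      · rintro ⟨hl, hk⟩
        rw [hrange] at hk
        funext i
        cases i with
        | inl i =>
          have h1 := congrFun hl i
          have h2 := congrFun hk i
          simp only [Sum.elim_inl, Pi.sub_apply, Pi.neg_apply, Pi.zero_apply,
            Function.comp_apply] at *
          linarith
        | inr i =>
          have h1 := congrFun hl i
          simp only [Sum.elim_inr, Pi.sub_apply, Pi.neg_apply, Pi.zero_apply,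
            Function.comp_apply] at *
          linarith
    refine ⟨{ toFun := fun w => ⟨(w : (Fin n ⊕ Fin n) → ℤ) ∘ Sum.inr,
                LinearMap.mem_ker.mpr ((hker w.1).mp w.2).2⟩
              invFun := fun y => ⟨Sum.elim (-(y : Fin n → ℤ)) (y : Fin n → ℤ),
                (hker _).mpr ⟨by simp, by simpa using LinearMap.mem_ker.mp y.2⟩⟩
              left_inv := ?_
              right_inv := ?_
              map_add' := fun w w' => rfl }⟩
    · rintro ⟨w, hw⟩
      have hl := ((hker w).mp hw).1
      apply Subtype.ext
      funext i
      cases i with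
      | inl i => simpa using (congrFun hl i).symm
      | inr i => rfl
    · rintro ⟨y, hy⟩
      rfl
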